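/- arXiv:1307.6624 — 3 statements merged into one kernel-verified Lean document; each statement's English description precedes it below -/
import Mathlib

section
/- Let p be a prime and n ≥ 1. For a representation ρ : G → U_{n+1}(F_p) of a group G into the group of upper-triangular unipotent (n+1)×(n+1) matrices over F_p, ρ is trivial on the (n+1)-st term G_{(n+1)} of the p-Zassenhaus filtration of G. Equivalently, the group U_{n+1}(F_p) satisfies U_{n+1}(F_p)_{(n+1)} = 1. -/
open Subgroup

/-- The `p`-Zassenhaus filtration of a group `G`:
`G_(1) = G` and `G_(n) = (G_(⌈n/p⌉))^p ∏_{i+j=n} [G_(i), G_(j)]`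
(for `p ≥ 2` and `n ≥ 2`, the number `min (n-1) ((n+p-1)/p)` equals `⌈n/p⌉`). -/
def zassenhaus (p : ℕ) (G : Type*) [Group G] : ℕ → Subgroup G
  | 0 => ⊤
  | 1 => ⊤
  | (n + 2) =>
      Subgroup.closure
        ((fun x => x ^ p) '' (zassenhaus p G (min (n + 1) ((n + 2 + p - 1) / p)) : Set G))
      ⊔ ⨆ i : Fin (n + 1), ⁅zassenhaus p G (i.1 + 1), zassenhaus p G (n + 1 - i.1)⁆
termination_by n => n
decreasing_by
  · omega
  · have := i.isLt; omega
  · have := i.isLt; omega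

/-- The group `U_m(𝔽_p)` of upper-triangular unipotent `m × m` matrices over `𝔽_p`,
as a subgroup of the units of the matrix ring. -/
def Unip (p m : ℕ) [NeZero p] : Subgroup (Matrix (Fin m) (Fin m) (ZMod p))ˣ where
  carrier := {g | (∀ i, g.val i i = 1) ∧ ∀ i j : Fin m, j < i → g.val i j = 0}
  one_mem' := by
    refine ⟨fun i => ?_, fun i j h => ?_⟩
    · simp
    · simp [Matrix.one_apply, (Fin.ne_of_lt h).symm]
  mul_mem' := by
    rintro a b ⟨ha1, ha0⟩ ⟨hb1, hb0⟩
    constructor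
    · intro i
      rw [Units.val_mul, Matrix.mul_apply]
      rw [Finset.sum_eq_single i]
      · rw [ha1, hb1, one_mul]
      · intro k _ hk
        rcases Ne.lt_or_gt hk with h | h
        · rw [ha0 i k h, zero_mul]
        · rw [hb0 k i h, mul_zero]
      · intro h; exact absurd (Finset.mem_univ i) h
    · intro i j hj
      rw [Units.val_mul, Matrix.mul_apply]
      apply Finset.sum_eq_zero
      intro k _
      rcases lt_or_ge k i with h | h
      · rw [ha0 i k h, zero_mul]
      · rw [hb0 k j (lt_of_lt_of_le hj h), mul_zero]
  inv_mem' := by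
    intro a ha
    have key : ∀ m : ℕ, (∀ i, (a ^ m).val i i = 1) ∧
        ∀ i j, j < i → (a ^ m).val i j = 0 := by
      intro m
      induction m with
      | zero =>
        refine ⟨fun i => ?_, fun i j h => ?_⟩
        · simp
        · simp [Matrix.one_apply, (Fin.ne_of_lt h).symm]
      | succ k ih =>
        obtain ⟨ha1, ha0⟩ := ha
        obtain ⟨ih1, ih0⟩ := ih
        rw [pow_succ]
        constructor
        · intro i
          rw [Units.val_mul, Matrix.mul_apply, Finset.sum_eq_single i]
          · rw [ih1, ha1, one_mul]
          · intro l _ hl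
            rcases Ne.lt_or_gt hl with h | h
            · rw [ih0 i l h, zero_mul]
            · rw [ha0 l i h, mul_zero]
          · intro h; exact absurd (Finset.mem_univ i) h
        · intro i j hj
          rw [Units.val_mul, Matrix.mul_apply]
          apply Finset.sum_eq_zero
          intro l _
          rcases lt_or_ge l i with h | h
          · rw [ih0 i l h, zero_mul]
          · rw [ha0 l j (lt_of_lt_of_le hj h), mul_zero]
    have hord : a ^ orderOf a = 1 := pow_orderOf_eq_one a
    have hpos : 0 < orderOf a := orderOf_pos a
    have hinv : a⁻¹ = a ^ (orderOf a - 1) := by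
      refine inv_eq_of_mul_eq_one_right ?_
      rw [← pow_succ', Nat.sub_add_cancel hpos, hord]
    rw [hinv]
    exact key _

/-!
Filter `U_m(R)` by depth: `U^k = {g | g - 1 vanishes below the k-th superdiagonal}`.
Then `U^1 = U_m(R)`, `U^m = 1`, `[U^i, U^j] ⊆ U^(i+j)` since
`[a, b] - 1 = ((a-1)(b-1) - (b-1)(a-1)) a⁻¹ b⁻¹`, and in characteristic `p` we have `(U^k)^p ⊆ U^(pk)` since `(1 + N)^p = 1 + N^p`.
The Zassenhaus filtration is the fastest descending series with these properties, so any
homomorphism `G → U_m(R)` sends `G_(k)` into `U^k`.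
-/

open scoped commutatorElement

section Zassenhaus

variable {G : Type*} [Group G]

lemma Nat.add_two_le_mul_min_ceil_div {p : ℕ} (hp : 2 ≤ p) (n : ℕ) :
    n + 2 ≤ p * min (n + 1) ((n + 2 + p - 1) / p) := by
  have hceil : (n + 2 + p - 1) / p = (n + 1) / p + 1 := by
    rw [show n + 2 + p - 1 = n + 1 + p by omega, Nat.add_div_right _ (by omega)]
  rcases le_total (n + 1) ((n + 2 + p - 1) / p) with h | h
  · rw [min_eq_left h]; nlinarith
  · rw [min_eq_right h, hceil]; exact Nat.lt_mul_div_succ _ (by omega)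

theorem zassenhaus_le_of_series {p : ℕ} (hp : 2 ≤ p) {N : ℕ → Subgroup G}
    (hN_one : N 1 = ⊤) (hN_anti : Antitone N) (hN_comm : ∀ i j, ⁅N i, N j⁆ ≤ N (i + j))
    (hN_pow : ∀ k, ∀ g ∈ N k, g ^ p ∈ N (p * k)) : ∀ k, zassenhaus p G k ≤ N k
  | 0 => fun g _ => hN_anti (Nat.zero_le 1) (hN_one ▸ Subgroup.mem_top g)
  | 1 => hN_one ▸ le_top
  | n + 2 => by
    rw [zassenhaus]
    refine sup_le ?_ (iSup_le fun i => ?_)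
    · rw [Subgroup.closure_le]
      rintro _ ⟨g, hg, rfl⟩
      exact hN_anti (Nat.add_two_le_mul_min_ceil_div hp n)
        (hN_pow _ g (zassenhaus_le_of_series hp hN_one hN_anti hN_comm hN_pow _ hg))
    · have hi := i.isLt
      calc ⁅zassenhaus p G (i.1 + 1), zassenhaus p G (n + 1 - i.1)⁆
          ≤ ⁅N (i.1 + 1), N (n + 1 - i.1)⁆ :=
            Subgroup.commutator_mono
              (zassenhaus_le_of_series hp hN_one hN_anti hN_comm hN_pow _)
              (zassenhaus_le_of_series hp hN_one hN_anti hN_comm hN_pow _)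
        _ ≤ N (n + 2) := (hN_comm _ _).trans (hN_anti (by omega))

end Zassenhaus

namespace Matrix

section Band

variable {R : Type*} [Ring R] {m : ℕ} {A B : Matrix (Fin m) (Fin m) R} {a b k : ℕ}

variable (R m) in
/-- Matrices supported on the `k`-th superdiagonal and above. -/
def upperBand (k : ℕ) : AddSubgroup (Matrix (Fin m) (Fin m) R) where
  carrier := {A | ∀ i j : Fin m, (j : ℕ) < i + k → A i j = 0}
  zero_mem' _ _ _ := rfl
  add_mem' hA hB i j h := by rw [add_apply, hA i j h, hB i j h, add_zero]
  neg_mem' hA i j h := by rw [neg_apply, hA i j h, neg_zero]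

lemma upperBand_antitone : Antitone (upperBand R m) :=
  fun _ _ hab _ hA i j h => hA i j (by omega)

lemma mem_upperBand_zero_iff : A ∈ upperBand R m 0 ↔ A.IsUpperTriangular :=
  ⟨fun hA i j h => hA i j (by simpa using h), fun hA i j h => hA (by simpa using h)⟩

lemma one_mem_upperBand_zero : (1 : Matrix (Fin m) (Fin m) R) ∈ upperBand R m 0 :=
  fun _ _ h => one_apply_ne (by omega)

lemma mul_mem_upperBand (hA : A ∈ upperBand R m a) (hB : B ∈ upperBand R m b) :
    A * B ∈ upperBand R m (a + b) := fun i j h => by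
  rw [mul_apply]
  refine Finset.sum_eq_zero fun l _ => ?_
  by_cases hl : (l : ℕ) < i + a
  · rw [hA i l hl, zero_mul]
  · rw [hB l j (by omega), mul_zero]

lemma pow_mem_upperBand (hA : A ∈ upperBand R m k) : ∀ n, A ^ n ∈ upperBand R m (n * k)
  | 0 => by simpa using one_mem_upperBand_zero
  | n + 1 => by
    rw [pow_succ, add_one_mul]
    exact mul_mem_upperBand (pow_mem_upperBand hA n) hA

lemma mem_upperBand_zero_of_sub_one (hA : A - 1 ∈ upperBand R m k) : A ∈ upperBand R m 0 := by
  simpa using add_mem (upperBand_antitone (Nat.zero_le k) hA) one_mem_upperBand_zero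

lemma upperBand_self : upperBand R m m = ⊥ :=
  eq_bot_iff.2 fun A hA => AddSubgroup.mem_bot.2 <| ext fun i j => (hA i j (by omega) : A i j = 0)

end Band

section Filtration

variable {R : Type*} [CommRing R] {m : ℕ} {g : (Matrix (Fin m) (Fin m) R)ˣ} {k : ℕ}

lemma val_inv_mem_upperBand_zero (hg : (g : Matrix (Fin m) (Fin m) R) ∈ upperBand R m 0) :
    ((g⁻¹ : (Matrix (Fin m) (Fin m) R)ˣ) : Matrix (Fin m) (Fin m) R) ∈ upperBand R m 0 := by
  let := g.invertible
  rw [coe_units_inv, mem_upperBand_zero_iff]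
  exact blockTriangular_inv_of_blockTriangular (mem_upperBand_zero_iff.1 hg)

variable (R m) in
/-- `U^k = 1 + upperBand R m k`; `U^1` is the unitriangular group `U_m(R)`. -/
def unipotentFiltration (k : ℕ) : Subgroup (Matrix (Fin m) (Fin m) R)ˣ where
  carrier := {g | (g : Matrix (Fin m) (Fin m) R) - 1 ∈ upperBand R m k}
  one_mem' := by simp
  mul_mem' {a b} ha hb := by
    have e : ((a * b : (Matrix (Fin m) (Fin m) R)ˣ) : Matrix (Fin m) (Fin m) R) - 1 =
        (a - 1) * (b - 1) + ((a - 1) + (b - 1)) := by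
      rw [Units.val_mul]; noncomm_ring
    rw [Set.mem_ofPred_eq, e]
    exact add_mem (upperBand_antitone (Nat.le_add_left k k) (mul_mem_upperBand ha hb))
      (add_mem ha hb)
  inv_mem' {a} ha := by
    have e : ((a⁻¹ : (Matrix (Fin m) (Fin m) R)ˣ) : Matrix (Fin m) (Fin m) R) - 1 =
        -((a⁻¹ : (Matrix (Fin m) (Fin m) R)ˣ) * (a - 1)) := by
      rw [mul_sub, Units.inv_mul, mul_one, neg_sub]
    rw [Set.mem_ofPred_eq, e]
    refine neg_mem ?_
    simpa using mul_mem_upperBand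
      (val_inv_mem_upperBand_zero (mem_upperBand_zero_of_sub_one ha)) ha

lemma mem_unipotentFiltration :
    g ∈ unipotentFiltration R m k ↔ (g : Matrix (Fin m) (Fin m) R) - 1 ∈ upperBand R m k :=
  Iff.rfl

lemma unipotentFiltration_antitone : Antitone (unipotentFiltration R m) :=
  fun _ _ hab _ hg => upperBand_antitone hab hg

lemma unipotentFiltration_self : unipotentFiltration R m m = ⊥ :=
  eq_bot_iff.2 fun _ hg => Subgroup.mem_bot.2 <| Units.ext <| sub_eq_zero.1 <|
    AddSubgroup.mem_bot.1 (upperBand_self.le hg)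

lemma val_commutatorElement_sub_one (a b : (Matrix (Fin m) (Fin m) R)ˣ) :
    ((⁅a, b⁆ : (Matrix (Fin m) (Fin m) R)ˣ) : Matrix (Fin m) (Fin m) R) - 1 =
      ((a - 1) * (b - 1) - (b - 1) * (a - 1)) *
        ((a⁻¹ : (Matrix (Fin m) (Fin m) R)ˣ) * (b⁻¹ : (Matrix (Fin m) (Fin m) R)ˣ)) := by
  set A : Matrix (Fin m) (Fin m) R := ↑a
  set B : Matrix (Fin m) (Fin m) R := ↑b
  set A' : Matrix (Fin m) (Fin m) R := ↑a⁻¹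
  set B' : Matrix (Fin m) (Fin m) R := ↑b⁻¹
  calc ((⁅a, b⁆ : (Matrix (Fin m) (Fin m) R)ˣ) : Matrix (Fin m) (Fin m) R) - 1
      = A * B * A' * B' - B * (A * A') * B' := by
        rw [a.mul_inv, mul_one, b.mul_inv, commutatorElement_def]
        simp only [Units.val_mul, A, B, A', B']
    _ = ((A - 1) * (B - 1) - (B - 1) * (A - 1)) * (A' * B') := by noncomm_ring

lemma commutatorElement_mem_unipotentFiltration {a b : (Matrix (Fin m) (Fin m) R)ˣ} {i j : ℕ}
    (ha : a ∈ unipotentFiltration R m i) (hb : b ∈ unipotentFiltration R m j) :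
    ⁅a, b⁆ ∈ unipotentFiltration R m (i + j) := by
  have hinv : ((a⁻¹ : (Matrix (Fin m) (Fin m) R)ˣ) : Matrix (Fin m) (Fin m) R) *
      (b⁻¹ : (Matrix (Fin m) (Fin m) R)ˣ) ∈ upperBand R m 0 :=
    mul_mem_upperBand (val_inv_mem_upperBand_zero (mem_upperBand_zero_of_sub_one ha))
      (val_inv_mem_upperBand_zero (mem_upperBand_zero_of_sub_one hb))
  have hcomm : ((a : Matrix (Fin m) (Fin m) R) - 1) * (b - 1) - (b - 1) * (a - 1) ∈
      upperBand R m (i + j) :=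
    sub_mem (mul_mem_upperBand ha hb) (add_comm j i ▸ mul_mem_upperBand hb ha)
  rw [mem_unipotentFiltration, val_commutatorElement_sub_one]
  exact mul_mem_upperBand (a := i + j) (b := 0) hcomm hinv

lemma pow_mem_unipotentFiltration_mul (p : ℕ) [Fact p.Prime] [CharP R p] [NeZero m]
    (hg : g ∈ unipotentFiltration R m k) : g ^ p ∈ unipotentFiltration R m (p * k) := by
  have hg' : (g : Matrix (Fin m) (Fin m) R) = (g - 1) + 1 := (sub_add_cancel _ _).symm
  rw [mem_unipotentFiltration, Units.val_pow_eq_pow_val, hg',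
    add_pow_char_of_commute _ (Commute.one_right _), one_pow, add_sub_cancel_right]
  exact pow_mem_upperBand hg p

end Filtration

end Matrix

lemma Unip_le_unipotentFiltration_one (p m : ℕ) [NeZero p] :
    Unip p m ≤ Matrix.unipotentFiltration (ZMod p) m 1 := by
  rintro g ⟨hdiag, hlower⟩ i j hij
  rw [Matrix.sub_apply]
  rcases (Nat.lt_succ_iff.1 hij).lt_or_eq with h | h
  · rw [hlower i j h, Matrix.one_apply_ne (by omega), sub_zero]
  · rw [Fin.ext h, hdiag, Matrix.one_apply_eq, sub_self]

theorem zassenhaus_le_comap_unipotentFiltration {G : Type*} [Group G] {R : Type*} [CommRing R]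
    {p m : ℕ} [Fact p.Prime] [CharP R p] [NeZero m] (f : G →* (Matrix (Fin m) (Fin m) R)ˣ)
    (hf : ∀ g, f g ∈ Matrix.unipotentFiltration R m 1) (k : ℕ) :
    zassenhaus p G k ≤ (Matrix.unipotentFiltration R m k).comap f :=
  zassenhaus_le_of_series (Fact.out : p.Prime).two_le
    (N := fun k => (Matrix.unipotentFiltration R m k).comap f)
    (eq_top_iff.2 fun g _ => hf g)
    (fun _ _ h => Subgroup.comap_mono (Matrix.unipotentFiltration_antitone h))
    (fun _ _ => Subgroup.commutator_le.2 fun _ ha _ hb => by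
      simpa only [Subgroup.mem_comap, map_commutatorElement] using
        Matrix.commutatorElement_mem_unipotentFiltration ha hb)
    (fun _ _ hg => by
      simpa only [Subgroup.mem_comap, map_pow] using
        Matrix.pow_mem_unipotentFiltration_mul p hg) k

theorem stmt_6_general (p n : ℕ) (hp : p.Prime) :
    (∀ (G : Type) [Group G] (ρ : G →* ↥(@Unip p (n + 1) ⟨hp.ne_zero⟩)),
        ∀ g ∈ zassenhaus p G (n + 1), ρ g = 1) ∧
    zassenhaus p (↥(@Unip p (n + 1) ⟨hp.ne_zero⟩)) (n + 1) = ⊥ := by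
  have : NeZero p := ⟨hp.ne_zero⟩
  have : Fact p.Prime := ⟨hp⟩
  have trivial_on_zassenhaus : ∀ (G : Type) [Group G] (ρ : G →* Unip p (n + 1)),
      ∀ g ∈ zassenhaus p G (n + 1), ρ g = 1 := by
    intro G _ ρ g hg
    have h := zassenhaus_le_comap_unipotentFiltration ((Unip p (n + 1)).subtype.comp ρ)
      (fun g => Unip_le_unipotentFiltration_one p (n + 1) (ρ g).2) (n + 1) hg
    rw [Matrix.unipotentFiltration_self] at h
    exact Subtype.ext (Subgroup.mem_bot.1 h)
  exact ⟨trivial_on_zassenhaus,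
    eq_bot_iff.2 fun g hg => trivial_on_zassenhaus _ (MonoidHom.id _) g hg⟩

theorem stmt_6 (p n : ℕ) (hp : p.Prime) (hn : 1 ≤ n) :
    (∀ (G : Type) [Group G] (ρ : G →* ↥(@Unip p (n + 1) ⟨hp.ne_zero⟩)),
        ∀ g ∈ zassenhaus p G (n + 1), ρ g = 1) ∧
    zassenhaus p (↥(@Unip p (n + 1) ⟨hp.ne_zero⟩)) (n + 1) = ⊥ :=
  stmt_6_general p n hp
end

section
/- Let p be an odd prime, G = Z/pZ, and χ : G → F_p the identity homomorphism viewed as an element of H¹(G, F_p). Then there exists no group homomorphism ρ : Z/pZ → U_{p+1}(F_p) whose (i, i+1)-coordinate equals χ for all i = 1, …, p. Concretely: if B ∈ U_{p+1}(F_p) is a unipotent upper-triangular (p+1)×(p+1) matrix all of whose entries at positions (i, i+1) equal 1, then B^p ≠ 1. -/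
open Matrix

/-- Unipotent upper-triangular predicate: 1's on the diagonal and 0's below it. -/
def IsUniUpper {m : ℕ} {R : Type*} [CommRing R] (M : Matrix (Fin m) (Fin m) R) : Prop :=
  (∀ i, M i i = 1) ∧ ∀ i j : Fin m, j < i → M i j = 0

lemma aux_pow {n : ℕ} {R : Type*} [CommRing R] (N : Matrix (Fin n) (Fin n) R)
    (h0 : ∀ i j : Fin n, (j : ℕ) ≤ i → N i j = 0)
    (h1 : ∀ i j : Fin n, (j : ℕ) = i + 1 → N i j = 1) :
    ∀ k (i j : Fin n), ((j : ℕ) < i + k → (N ^ k) i j = 0) ∧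
      ((j : ℕ) = (i : ℕ) + k → (N ^ k) i j = 1) := by
  intro k
  induction k with
  | zero =>
    intro i j
    constructor
    · intro h
      rw [pow_zero]
      exact Matrix.one_apply_ne (fun e => by subst e; omega)
    · intro h
      have : i = j := Fin.ext (by omega)
      rw [pow_zero, ← this, Matrix.one_apply_eq]
  | succ k ih =>
    intro i j
    constructor
    · intro h
      rw [pow_succ', Matrix.mul_apply]
      apply Finset.sum_eq_zero
      intro l _
      by_cases hl : (l : ℕ) ≤ i
      · rw [h0 i l hl, zero_mul]
      · rw [(ih l j).1 (by omega), mul_zero]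
    · intro h
      have hin : (i : ℕ) + 1 < n := by have := j.isLt; omega
      rw [pow_succ', Matrix.mul_apply,
        Finset.sum_eq_single (⟨(i : ℕ) + 1, hin⟩ : Fin n)]
      · rw [h1 i ⟨(i : ℕ) + 1, hin⟩ rfl,
          (ih ⟨(i : ℕ) + 1, hin⟩ j).2 (show (j : ℕ) = (i : ℕ) + 1 + k by omega), one_mul]
      · intro l _ hl
        by_cases hle : (l : ℕ) ≤ i
        · rw [h0 i l hle, zero_mul]
        · have hne : (l : ℕ) ≠ (i : ℕ) + 1 := fun e => hl (Fin.ext e)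
          rw [(ih l j).1 (by omega), mul_zero]
      · intro h'
        exact absurd (Finset.mem_univ _) h'

lemma keyB (p : ℕ) (hp : p.Prime) (B : Matrix (Fin (p + 1)) (Fin (p + 1)) (ZMod p))
    (hB : IsUniUpper B) (hs : ∀ i : Fin p, B i.castSucc i.succ = 1) : B ^ p ≠ 1 := by
  haveI : Fact p.Prime := ⟨hp⟩
  set N : Matrix (Fin (p + 1)) (Fin (p + 1)) (ZMod p) := B - 1 with hN
  have h0 : ∀ i j : Fin (p + 1), (j : ℕ) ≤ i → N i j = 0 := by
    intro i j h
    rcases eq_or_lt_of_le h with h | h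
    · have hij : i = j := Fin.ext h.symm
      subst hij
      simp [hN, Matrix.sub_apply, hB.1 i]
    · have hij : i ≠ j := fun e => by subst e; omega
      have hlt : j < i := h
      simp [hN, Matrix.sub_apply, hB.2 i j hlt, Matrix.one_apply_ne hij]
  have h1 : ∀ i j : Fin (p + 1), (j : ℕ) = i + 1 → N i j = 1 := by
    intro i j h
    have hi : (i : ℕ) < p := by have := j.isLt; omega
    have e1 : (⟨(i : ℕ), hi⟩ : Fin p).castSucc = i := Fin.ext rfl
    have e2 : (⟨(i : ℕ), hi⟩ : Fin p).succ = j := Fin.ext h.symm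
    have hij : i ≠ j := fun e => by rw [e] at h; omega
    rw [hN, Matrix.sub_apply, Matrix.one_apply_ne hij, ← e1, ← e2, hs, sub_zero]
  have hB1 : B = 1 + N := by simp [hN]
  have haux := aux_pow N h0 h1
  have hne : (0 : Fin (p + 1)) ≠ Fin.last p := by
    have hp0 := hp.pos
    simp only [Fin.ne_iff_vne, Fin.val_zero, Fin.val_last]
    omega
  intro hcontra
  have hc : (1 + N) ^ p = ∑ m ∈ Finset.range (p + 1), (p.choose m) • N ^ (p - m) := by
    rw [(Commute.one_left N).add_pow]
    refine Finset.sum_congr rfl fun m _ => ?_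
    rw [one_pow, one_mul, nsmul_eq_mul, Nat.cast_comm]
  have hBpow : (B ^ p) 0 (Fin.last p) = 1 := by
    rw [hB1, hc, Matrix.sum_apply]
    rw [Finset.sum_eq_single 0]
    · rw [Matrix.smul_apply, Nat.choose_zero_right, one_smul, Nat.sub_zero]
      exact (haux p 0 (Fin.last p)).2 (by simp [Fin.val_last])
    · intro m hm hm0
      rcases eq_or_lt_of_le (Nat.lt_succ_iff.mp (Finset.mem_range.mp hm)) with h | h
      · rw [h, Matrix.smul_apply, Nat.sub_self, pow_zero,
          Matrix.one_apply_ne hne, smul_zero]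
      · have hz : ((p.choose m : ℕ) : ZMod p) = 0 := by
          rw [ZMod.natCast_eq_zero_iff]
          exact hp.dvd_choose_self hm0 h
        rw [Matrix.smul_apply, nsmul_eq_mul, hz, zero_mul]
    · intro h'
      exact absurd (Finset.mem_range.mpr (by omega)) h'
  rw [hcontra, Matrix.one_apply_ne hne] at hBpow
  exact one_ne_zero hBpow.symm

theorem stmt_7 (p : ℕ) (hp : p.Prime) (hodd : p ≠ 2) :
    (¬∃ ρ : Multiplicative (ZMod p) →* (Matrix (Fin (p + 1)) (Fin (p + 1)) (ZMod p))ˣ,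
        (∀ g, IsUniUpper (ρ g).val) ∧
        (∀ g (i : Fin p), (ρ g).val i.castSucc i.succ = Multiplicative.toAdd g)) ∧
    ∀ B : Matrix (Fin (p + 1)) (Fin (p + 1)) (ZMod p),
      IsUniUpper B → (∀ i : Fin p, B i.castSucc i.succ = 1) → B ^ p ≠ 1 := by
  refine ⟨?_, fun B h1 h2 => keyB p hp B h1 h2⟩
  rintro ⟨ρ, hu, hs⟩
  set g : Multiplicative (ZMod p) := Multiplicative.ofAdd 1 with hg
  have hkey := keyB p hp (ρ g).val (hu g) (fun i => by rw [hs g i]; rfl)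
  apply hkey
  have hgp : g ^ p = 1 := by
    rw [hg, ← ofAdd_nsmul]
    simp [ZMod.natCast_self]
  calc (ρ g).val ^ p = ((ρ g) ^ p).val := (Units.val_pow_eq_pow_val _ _).symm
    _ = (ρ (g ^ p)).val := by rw [map_pow]
    _ = 1 := by rw [hgp, _root_.map_one, Units.val_one]
end

section
/- In the free group S on generators x₁, …, x₅, consider r = [x₄,x₅]·[[x₂,x₃],x₁]. Define ρ : S → U₄(F_p) by sending x₁, x₂, x₃ to arbitrary matrices of the forms A = unipotent with (1,2)-entry 1, (1,3)-entry a₁, (1,4)-entry b₁, (2,4)-entry c₁; B with (2,3)-entry 1 and entries a₂,b₂,c₂ at (1,3),(1,4),(2,4); C with (3,4)-entry 1 and entries a₃,b₃,c₃ at (1,3),(1,4),(2,4); and sending x₄, x₅ to matrices whose only nonzero off-diagonal entries are at positions (1,3), (1,4), (2,4). Then ρ(x₄) and ρ(x₅) commute, and ρ(r) = [[ρ(x₂),ρ(x₃)],ρ(x₁)] is the matrix with (1,4)-entry −1 and other off-diagonal entries 0; in particular ρ(r) ≠ 1. -/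
open Matrix

/-- The group-theoretic commutator `[x,y] = x⁻¹y⁻¹xy`. -/
def gcomm {G : Type*} [Group G] (x y : G) : G := x⁻¹ * y⁻¹ * x * y

private lemma uinv {M : Type*} [Monoid M] (X : Mˣ) (m : M) (h : X.val * m = 1) :
    (X⁻¹).val = m := by
  calc (X⁻¹).val = (X⁻¹).val * (X.val * m) := by rw [h, mul_one]
    _ = m := by rw [← mul_assoc, Units.inv_mul, one_mul]

set_option maxHeartbeats 4000000 in
theorem stmt_17 (p : ℕ) (hp : p.Prime)
    (a₁ b₁ c₁ a₂ b₂ c₂ a₃ b₃ c₃ a₄ b₄ c₄ a₅ b₅ c₅ : ZMod p)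
    (A B C D E : (Matrix (Fin 4) (Fin 4) (ZMod p))ˣ)
    (hA : A.val = !![1, 1, a₁, b₁; 0, 1, 0, c₁; 0, 0, 1, 0; 0, 0, 0, 1])
    (hB : B.val = !![1, 0, a₂, b₂; 0, 1, 1, c₂; 0, 0, 1, 0; 0, 0, 0, 1])
    (hC : C.val = !![1, 0, a₃, b₃; 0, 1, 0, c₃; 0, 0, 1, 1; 0, 0, 0, 1])
    (hD : D.val = !![1, 0, a₄, b₄; 0, 1, 0, c₄; 0, 0, 1, 0; 0, 0, 0, 1])
    (hE : E.val = !![1, 0, a₅, b₅; 0, 1, 0, c₅; 0, 0, 1, 0; 0, 0, 0, 1])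
    (ρ : FreeGroup (Fin 5) →* (Matrix (Fin 4) (Fin 4) (ZMod p))ˣ)
    (hρ : ρ = FreeGroup.lift ![A, B, C, D, E])
    (r : FreeGroup (Fin 5))
    (hr : r = gcomm (FreeGroup.of 3) (FreeGroup.of 4) *
              gcomm (gcomm (FreeGroup.of 1) (FreeGroup.of 2)) (FreeGroup.of 0)) :
    D * E = E * D ∧
    ρ r = gcomm (gcomm B C) A ∧
    (ρ r).val = !![1, 0, 0, -1; 0, 1, 0, 0; 0, 0, 1, 0; 0, 0, 0, 1] ∧
    ρ r ≠ 1 := by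
  haveI : Fact p.Prime := ⟨hp⟩
  have hDE : D * E = E * D := by
    apply Units.ext
    rw [Units.val_mul, Units.val_mul, hD, hE]
    ext i j
    fin_cases i <;> fin_cases j <;>
      simp [Matrix.mul_apply, Fin.sum_univ_four, Matrix.vecHead, Matrix.vecTail] <;> ring
  have hgDE : gcomm D E = 1 := by
    rw [gcomm, mul_assoc, mul_assoc, hDE, inv_mul_cancel_left, inv_mul_cancel]
  have hρ0 : ρ (FreeGroup.of 0) = A := by rw [hρ, FreeGroup.lift_apply_of]; rfl
  have hρ1 : ρ (FreeGroup.of 1) = B := by rw [hρ, FreeGroup.lift_apply_of]; rfl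
  have hρ2 : ρ (FreeGroup.of 2) = C := by rw [hρ, FreeGroup.lift_apply_of]; rfl
  have hρ3 : ρ (FreeGroup.of 3) = D := by rw [hρ, FreeGroup.lift_apply_of]; rfl
  have hρ4 : ρ (FreeGroup.of 4) = E := by rw [hρ, FreeGroup.lift_apply_of]; rfl
  have hρr : ρ r = gcomm (gcomm B C) A := by
    have e1 : ρ (gcomm (FreeGroup.of 3) (FreeGroup.of 4)) = gcomm D E := by
      simp only [gcomm, _root_.map_mul, map_inv, hρ3, hρ4]
    have e2 : ρ (gcomm (gcomm (FreeGroup.of 1) (FreeGroup.of 2)) (FreeGroup.of 0)) =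
        gcomm (gcomm B C) A := by
      simp only [gcomm, _root_.map_mul, map_inv, hρ0, hρ1, hρ2]
    rw [hr, _root_.map_mul, e1, e2, hgDE, one_mul]
  have hBi : (B⁻¹).val = !![1, 0, -a₂, -b₂; 0, 1, -1, -c₂; 0, 0, 1, 0; 0, 0, 0, 1] := by
    apply uinv
    rw [hB]
    ext i j
    fin_cases i <;> fin_cases j <;>
      simp [Matrix.mul_apply, Fin.sum_univ_four, Matrix.one_apply, Matrix.vecHead, Matrix.vecTail] <;> ring
  have hCi : (C⁻¹).val = !![1, 0, -a₃, a₃ - b₃; 0, 1, 0, -c₃; 0, 0, 1, -1; 0, 0, 0, 1] := by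
    apply uinv
    rw [hC]
    ext i j
    fin_cases i <;> fin_cases j <;>
      simp [Matrix.mul_apply, Fin.sum_univ_four, Matrix.one_apply, Matrix.vecHead, Matrix.vecTail] <;> ring
  have hG : (gcomm B C).val = !![1, 0, 0, a₂; 0, 1, 0, 1; 0, 0, 1, 0; 0, 0, 0, 1] := by
    have s1 : (B⁻¹).val * (C⁻¹).val =
        !![1, 0, -a₂ - a₃, a₂ - b₂ + a₃ - b₃; 0, 1, -1, 1 - c₂ - c₃; 0, 0, 1, -1; 0, 0, 0, 1] := by
      rw [hBi, hCi]
      ext i j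
      fin_cases i <;> fin_cases j <;>
        simp [Matrix.mul_apply, Fin.sum_univ_four, Matrix.vecHead, Matrix.vecTail] <;> ring
    have s2 : (B⁻¹).val * (C⁻¹).val * B.val =
        !![1, 0, -a₃, a₂ + a₃ - b₃; 0, 1, 0, 1 - c₃; 0, 0, 1, -1; 0, 0, 0, 1] := by
      rw [s1, hB]
      ext i j
      fin_cases i <;> fin_cases j <;>
        simp [Matrix.mul_apply, Fin.sum_univ_four, Matrix.vecHead, Matrix.vecTail] <;> ring
    rw [gcomm, Units.val_mul, Units.val_mul, Units.val_mul, s2, hC]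
    ext i j
    fin_cases i <;> fin_cases j <;>
      simp [Matrix.mul_apply, Fin.sum_univ_four, Matrix.vecHead, Matrix.vecTail] <;> ring
  have hGi : ((gcomm B C)⁻¹).val =
      !![1, 0, 0, -a₂; 0, 1, 0, -1; 0, 0, 1, 0; 0, 0, 0, 1] := by
    apply uinv
    rw [hG]
    ext i j
    fin_cases i <;> fin_cases j <;>
      simp [Matrix.mul_apply, Fin.sum_univ_four, Matrix.one_apply, Matrix.vecHead, Matrix.vecTail] <;> ring
  have hAi : (A⁻¹).val = !![1, -1, -a₁, c₁ - b₁; 0, 1, 0, -c₁; 0, 0, 1, 0; 0, 0, 0, 1] := by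
    apply uinv
    rw [hA]
    ext i j
    fin_cases i <;> fin_cases j <;>
      simp [Matrix.mul_apply, Fin.sum_univ_four, Matrix.one_apply, Matrix.vecHead, Matrix.vecTail] <;> ring
  have hval : (gcomm (gcomm B C) A).val =
      !![1, 0, 0, -1; 0, 1, 0, 0; 0, 0, 1, 0; 0, 0, 0, 1] := by
    have s1 : ((gcomm B C)⁻¹).val * (A⁻¹).val =
        !![1, -1, -a₁, -a₂ + c₁ - b₁; 0, 1, 0, -1 - c₁; 0, 0, 1, 0; 0, 0, 0, 1] := by
      rw [hGi, hAi]
      ext i j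
      fin_cases i <;> fin_cases j <;>
        simp [Matrix.mul_apply, Fin.sum_univ_four, Matrix.vecHead, Matrix.vecTail] <;> ring
    have s2 : ((gcomm B C)⁻¹).val * (A⁻¹).val * (gcomm B C).val =
        !![1, -1, -a₁, -1 + c₁ - b₁; 0, 1, 0, -c₁; 0, 0, 1, 0; 0, 0, 0, 1] := by
      rw [s1, hG]
      ext i j
      fin_cases i <;> fin_cases j <;>
        simp [Matrix.mul_apply, Fin.sum_univ_four, Matrix.vecHead, Matrix.vecTail] <;> ring
    rw [gcomm, Units.val_mul, Units.val_mul, Units.val_mul, s2, hA]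
    ext i j
    fin_cases i <;> fin_cases j <;>
      simp [Matrix.mul_apply, Fin.sum_univ_four, Matrix.vecHead, Matrix.vecTail] <;> ring
  refine ⟨hDE, hρr, by rw [hρr, hval], ?_⟩
  intro h
  rw [hρr] at h
  have h' := congrArg Units.val h
  rw [hval, Units.val_one] at h'
  have h2 : (-1 : ZMod p) = (1 : Matrix (Fin 4) (Fin 4) (ZMod p)) 0 3 := by
    rw [← h']; rfl
  simp [Matrix.one_apply] at h2
end
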